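/- arXiv:2212.14259 — 2 statements merged into one kernel-verified Lean document; each statement's English description precedes it below -/
import Mathlib

section
/- Suppose 𝒞 ⊂ L⁰_c is solid and 𝒫-sensitive with reduction set 𝒬 ⊂ 𝔓_c(Ω). Then the following are equivalent: (1) 𝒞 is sequentially order closed; (2) 𝒞 is 𝒬-closed; (3) 𝒞 is locally Q-closed for each Q ∈ 𝒬; (4) j_Q(𝒞) is Q-closed in L⁰_Q for each Q ∈ 𝒬; (5) j_Q(𝒞) is order closed with respect to the Q-a.s. order on L⁰_Q for each Q ∈ 𝒬; (6) j_Q(𝒞) is sequentially order closed with respect to the Q-a.s. order on L⁰_Q for each Q ∈ 𝒬. -/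
open MeasureTheory Filter Set
open scoped ENNReal

namespace Robust

variable {Ω : Type*} [MeasurableSpace Ω]

/-- `Q` vanishes on every `𝔓`-polar set, i.e. `Q ≪ 𝔓`. -/
def AC (𝔓 : Set (Measure Ω)) (Q : Measure Ω) : Prop :=
  ∀ N : Set Ω, MeasurableSet N → (∀ P ∈ 𝔓, P N = 0) → Q N = 0

/-- `𝔓_c(Ω)`: probability measures vanishing on all `𝔓`-polar sets. -/
def PC (𝔓 : Set (Measure Ω)) : Set (Measure Ω) :=
  {Q | IsProbabilityMeasure Q ∧ AC 𝔓 Q}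

/-- `𝔓`-quasi-sure equality of random variables. -/
def QSEq (𝔓 : Set (Measure Ω)) (f g : Ω → ℝ) : Prop := ∀ P ∈ 𝔓, f =ᵐ[P] g

/-- The `𝔓`-quasi-sure order. -/
def QSLe (𝔓 : Set (Measure Ω)) (f g : Ω → ℝ) : Prop := ∀ P ∈ 𝔓, f ≤ᵐ[P] g

/-- Representatives of elements of `L⁰`: the measurable functions. -/
def L0 (Ω : Type*) [MeasurableSpace Ω] : Set (Ω → ℝ) := {f | Measurable f}

/-- Representatives of elements of the positive cone `L⁰_{c+}`. -/
def L0pos (𝔓 : Set (Measure Ω)) : Set (Ω → ℝ) :=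
  {f | Measurable f ∧ QSLe 𝔓 (fun _ => 0) f}

/-- Representatives of elements of `L^∞_c`. -/
def Linf (𝔓 : Set (Measure Ω)) : Set (Ω → ℝ) :=
  {f | Measurable f ∧ ∃ m : ℝ, 0 < m ∧ QSLe 𝔓 (fun ω => |f ω|) (fun _ => m)}

/-- Representatives of elements of `L^∞_{c+}`. -/
def LinfPos (𝔓 : Set (Measure Ω)) : Set (Ω → ℝ) :=
  {f | f ∈ Linf 𝔓 ∧ QSLe 𝔓 (fun _ => 0) f}

/-- A set of functions representing a set of equivalence classes in `L⁰_c`: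
it consists of measurable functions and is saturated under `𝔓`-q.s. equality. -/
def IsL0Set (𝔓 : Set (Measure Ω)) (𝒞 : Set (Ω → ℝ)) : Prop :=
  𝒞 ⊆ L0 Ω ∧ ∀ f ∈ 𝒞, ∀ g : Ω → ℝ, Measurable g → QSEq 𝔓 f g → g ∈ 𝒞

/-- Function-level version of `j_Q⁻¹ (j_Q 𝒞)` (equivalently, of the subset `j_Q 𝒞` of `L⁰_Q`):
the `Q`-a.s. saturation of `𝒞`. -/
def jSat (Q : Measure Ω) (𝒞 : Set (Ω → ℝ)) : Set (Ω → ℝ) :=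
  {f | Measurable f ∧ ∃ g ∈ 𝒞, f =ᵐ[Q] g}

/-- `𝒬` is a reduction set for `𝒞`. -/
def IsReductionSet (𝔓 𝒬 : Set (Measure Ω)) (𝒞 : Set (Ω → ℝ)) : Prop :=
  𝒬.Nonempty ∧ 𝒬 ⊆ PC 𝔓 ∧ 𝒞 = ⋂ Q ∈ 𝒬, jSat Q 𝒞

/-- `𝒞` is `𝔓`-sensitive. -/
def Sensitive (𝔓 : Set (Measure Ω)) (𝒞 : Set (Ω → ℝ)) : Prop :=
  𝒞 = ⋂ Q ∈ PC 𝔓, jSat Q 𝒞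

/-- `𝒞` is `𝒬`-closed: closed under sequential convergence in `Q`-probability for all `Q ∈ 𝒬`
simultaneously. -/
def QClosedSet (𝒬 : Set (Measure Ω)) (𝒞 : Set (Ω → ℝ)) : Prop :=
  ∀ (X : ℕ → Ω → ℝ) (x : Ω → ℝ), (∀ n, X n ∈ 𝒞) → Measurable x →
    (∀ Q ∈ 𝒬, TendstoInMeasure Q X atTop x) → x ∈ 𝒞

/-- `𝒞` is locally `Q`-closed. -/
def LocallyQClosed (Q : Measure Ω) (𝒞 : Set (Ω → ℝ)) : Prop :=
  ∀ (X : ℕ → Ω → ℝ) (x : Ω → ℝ), (∀ n, X n ∈ 𝒞) → Measurable x →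
    TendstoInMeasure Q X atTop x → ∃ y ∈ 𝒞, x =ᵐ[Q] y

/-- `𝒞` is solid in `L⁰_c` (w.r.t. the quasi-sure order of `𝔓`). -/
def SolidL0 (𝔓 : Set (Measure Ω)) (𝒞 : Set (Ω → ℝ)) : Prop :=
  ∀ f ∈ 𝒞, ∀ g : Ω → ℝ, Measurable g →
    QSLe 𝔓 (fun ω => |g ω|) (fun ω => |f ω|) → g ∈ 𝒞

/-- `𝒞` is solid in `L⁰_{c+}`. -/
def SolidPos (𝔓 : Set (Measure Ω)) (𝒞 : Set (Ω → ℝ)) : Prop :=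
  𝒞 ⊆ L0pos 𝔓 ∧ ∀ f ∈ 𝒞, ∀ g ∈ L0pos 𝔓, QSLe 𝔓 g f → g ∈ 𝒞

/-- `𝒞` is solid (in either of the two senses). -/
def Solid (𝔓 : Set (Measure Ω)) (𝒞 : Set (Ω → ℝ)) : Prop :=
  SolidL0 𝔓 𝒞 ∨ SolidPos 𝔓 𝒞

/-- `f` is the infimum (greatest lower bound) of the family `Y` in the `𝔓`-q.s. order. -/
def IsQSInf (𝔓 : Set (Measure Ω)) {ι : Sort*} (Y : ι → Ω → ℝ) (f : Ω → ℝ) : Prop :=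
  (∀ a, QSLe 𝔓 f (Y a)) ∧
    ∀ g : Ω → ℝ, Measurable g → (∀ a, QSLe 𝔓 g (Y a)) → QSLe 𝔓 g f

/-- `f` is the supremum (least upper bound) of the family `Y` in the `𝔓`-q.s. order. -/
def IsQSSup (𝔓 : Set (Measure Ω)) {ι : Sort*} (Y : ι → Ω → ℝ) (f : Ω → ℝ) : Prop :=
  (∀ a, QSLe 𝔓 (Y a) f) ∧
    ∀ g : Ω → ℝ, Measurable g → (∀ a, QSLe 𝔓 (Y a) g) → QSLe 𝔓 f g

/-- Order convergence of a sequence in `L⁰_c`. -/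
def SeqOrderConv (𝔓 : Set (Measure Ω)) (X : ℕ → Ω → ℝ) (x : Ω → ℝ) : Prop :=
  ∃ Y : ℕ → Ω → ℝ, (∀ n, Measurable (Y n)) ∧
    (∀ m n : ℕ, m ≤ n → QSLe 𝔓 (Y n) (Y m)) ∧
    IsQSInf 𝔓 Y (fun _ => 0) ∧
    ∀ n, QSLe 𝔓 (fun ω => |X n ω - x ω|) (Y n)

/-- `𝒞` is sequentially order closed. -/
def SeqOrderClosed (𝔓 : Set (Measure Ω)) (𝒞 : Set (Ω → ℝ)) : Prop :=
  ∀ (X : ℕ → Ω → ℝ) (x : Ω → ℝ), (∀ n, X n ∈ 𝒞) → Measurable x →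
    SeqOrderConv 𝔓 X x → x ∈ 𝒞

/-- Order convergence of a net in `L⁰_c`. -/
def NetOrderConv (𝔓 : Set (Measure Ω)) {ι : Type*} [Preorder ι]
    (X : ι → Ω → ℝ) (x : Ω → ℝ) : Prop :=
  ∃ Y : ι → Ω → ℝ, (∀ a, Measurable (Y a)) ∧
    (∀ a b : ι, a ≤ b → QSLe 𝔓 (Y b) (Y a)) ∧
    IsQSInf 𝔓 Y (fun _ => 0) ∧
    ∀ a, QSLe 𝔓 (fun ω => |X a ω - x ω|) (Y a)

/-- `𝒞` is order closed (w.r.t. order convergence of nets). -/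
def OrderClosed (𝔓 : Set (Measure Ω)) (𝒞 : Set (Ω → ℝ)) : Prop :=
  ∀ (ι : Type*) [Preorder ι] [IsDirected ι (· ≤ ·)] [Nonempty ι],
    ∀ (X : ι → Ω → ℝ) (x : Ω → ℝ), (∀ a, X a ∈ 𝒞) → Measurable x →
      NetOrderConv 𝔓 X x → x ∈ 𝒞

/-- Order convergence of all (directed) nets is preserved under `j_Q`. -/
def NetOrderConvTransfer (𝔓 : Set (Measure Ω)) (Q : Measure Ω) : Prop :=
  ∀ (ι : Type*) [Preorder ι] [IsDirected ι (· ≤ ·)] [Nonempty ι],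
    ∀ (X : ι → Ω → ℝ) (x : Ω → ℝ), (∀ a, Measurable (X a)) → Measurable x →
      NetOrderConv 𝔓 X x → NetOrderConv {Q} X x

/-- A measure is supported (relative to the `𝔓`-polar sets). -/
def SupportedMeasure (𝔓 : Set (Measure Ω)) (μ : Measure Ω) : Prop :=
  ∃ S : Set Ω, MeasurableSet S ∧ μ Sᶜ = 0 ∧
    ∀ N : Set Ω, MeasurableSet N → μ (N ∩ S) = 0 → ∀ P ∈ 𝔓, P (N ∩ S) = 0

/-- The (possibly infinite) expectation `E_Q[f]` of a (q.s.) non-negative random variable. -/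
noncomputable def EExp (Q : Measure Ω) (f : Ω → ℝ) : ℝ≥0∞ :=
  ∫⁻ ω, ENNReal.ofReal (f ω) ∂Q

/-- The polar `𝒞°_𝒬` of `𝒞` consisting of pairs `(Q, Z)` with `Q ∈ 𝒬` and `Z` in the
set `Zs` of dual test functions (e.g. `L^∞_{c+}` or `L⁰_{c+}`). -/
def polarPairs (𝒬 : Set (Measure Ω)) (Zs 𝒞 : Set (Ω → ℝ)) :
    Set (Measure Ω × (Ω → ℝ)) :=
  {p | p.1 ∈ 𝒬 ∧ p.2 ∈ Zs ∧ ∀ f ∈ 𝒞, EExp p.1 (fun ω => p.2 ω * f ω) ≤ 1}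

/-- The bipolar `𝒞°°_𝒬` of `𝒞`. -/
def bipolarPairs (𝔓 𝒬 : Set (Measure Ω)) (Zs 𝒞 : Set (Ω → ℝ)) : Set (Ω → ℝ) :=
  {f | f ∈ L0pos 𝔓 ∧ ∀ p ∈ polarPairs 𝒬 Zs 𝒞, EExp p.1 (fun ω => p.2 ω * f ω) ≤ 1}

/-- The polar `𝒞^*_𝒬` with a uniform (supremum) constraint. -/
def starPolar (𝔓 𝒬 : Set (Measure Ω)) (𝒞 : Set (Ω → ℝ)) : Set (Ω → ℝ) :=
  {Z | Z ∈ LinfPos 𝔓 ∧ ∀ f ∈ 𝒞, (⨆ Q ∈ 𝒬, EExp Q fun ω => Z ω * f ω) ≤ 1}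

/-- The bipolar `𝒞^{**}_𝒬` with a uniform (supremum) constraint. -/
def starBipolar (𝔓 𝒬 : Set (Measure Ω)) (𝒞 : Set (Ω → ℝ)) : Set (Ω → ℝ) :=
  {f | f ∈ L0pos 𝔓 ∧ ∀ Z ∈ starPolar 𝔓 𝒬 𝒞, (⨆ Q ∈ 𝒬, EExp Q fun ω => Z ω * f ω) ≤ 1}

/-- `ca_c`: finite signed measures vanishing on all `𝔓`-polar sets. -/
def CAc (𝔓 : Set (Measure Ω)) : Set (SignedMeasure Ω) :=
  {ν | ∀ N : Set Ω, MeasurableSet N → (∀ P ∈ 𝔓, P N = 0) → ν.totalVariation N = 0}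

/-- A signed measure is supported if its total variation is. -/
def SupportedSigned (𝔓 : Set (Measure Ω)) (ν : SignedMeasure Ω) : Prop :=
  SupportedMeasure 𝔓 ν.totalVariation

/-- `sca_c`: supported signed measures in `ca_c`. -/
def SCAc (𝔓 : Set (Measure Ω)) : Set (SignedMeasure Ω) :=
  {ν | ν ∈ CAc 𝔓 ∧ SupportedSigned 𝔓 ν}

/-- A signed measure is non-negative. -/
def nonnegSM (ν : SignedMeasure Ω) : Prop := ∀ N : Set Ω, MeasurableSet N → 0 ≤ ν N

/-- The measure associated to a non-negative signed measure (its Jordan positive part). -/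
noncomputable def posMeas (ν : SignedMeasure Ω) : Measure Ω :=
  ν.toJordanDecomposition.posPart

/-- The pairing `∫ f dν` of a function with a signed measure. -/
noncomputable def pairSM (ν : SignedMeasure Ω) (f : Ω → ℝ) : ℝ :=
  ∫ ω, f ω ∂ν.toJordanDecomposition.posPart - ∫ ω, f ω ∂ν.toJordanDecomposition.negPart

/-- The total variation `|ν|` of a signed measure, as a signed measure. -/
noncomputable def tvSigned (ν : SignedMeasure Ω) : SignedMeasure Ω :=
  ν.toJordanDecomposition.posPart.toSignedMeasure +
    ν.toJordanDecomposition.negPart.toSignedMeasure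

/-- `𝔓` is of class (S). -/
def ClassS (𝔓 : Set (Measure Ω)) : Prop :=
  ∃ 𝒬 : Set (Measure Ω), 𝒬 ⊆ PC 𝔓 ∧ (∀ Q ∈ 𝒬, SupportedMeasure 𝔓 Q) ∧
    ∀ N : Set Ω, MeasurableSet N → ((∀ P ∈ 𝔓, P N = 0) ↔ ∀ Q ∈ 𝒬, Q N = 0)

/-- The polar `𝒞°_{ca}` of `𝒞 ⊂ L⁰_{c+}` inside `ca_{c+}` (non-negative members of `ca_c`). -/
def polarCA (𝔓 : Set (Measure Ω)) (𝒞 : Set (Ω → ℝ)) : Set (SignedMeasure Ω) :=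
  {ν | nonnegSM ν ∧ ν ∈ CAc 𝔓 ∧ ∀ f ∈ 𝒞, EExp (posMeas ν) f ≤ 1}

/-- The bipolar `𝒞°°_{ca}`. -/
def bipolarCA (𝔓 : Set (Measure Ω)) (𝒞 : Set (Ω → ℝ)) : Set (Ω → ℝ) :=
  {f | f ∈ L0pos 𝔓 ∧ ∀ ν ∈ polarCA 𝔓 𝒞, EExp (posMeas ν) f ≤ 1}

/-- The polar `𝒞°_{sca}` of `𝒞 ⊂ L⁰_{c+}` inside `sca_{c+}`. -/
def polarSCA (𝔓 : Set (Measure Ω)) (𝒞 : Set (Ω → ℝ)) : Set (SignedMeasure Ω) :=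
  {ν | nonnegSM ν ∧ ν ∈ SCAc 𝔓 ∧ ∀ f ∈ 𝒞, EExp (posMeas ν) f ≤ 1}

/-- The bipolar `𝒞°°_{sca}`. -/
def bipolarSCA (𝔓 : Set (Measure Ω)) (𝒞 : Set (Ω → ℝ)) : Set (Ω → ℝ) :=
  {f | f ∈ L0pos 𝔓 ∧ ∀ ν ∈ polarSCA 𝔓 𝒞, EExp (posMeas ν) f ≤ 1}

/-- The weak topology `σ(M, L^∞_c)` on a set `M` of signed measures. -/
noncomputable def sigmaTop (𝔓 : Set (Measure Ω)) (M : Set (SignedMeasure Ω)) :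
    TopologicalSpace M :=
  TopologicalSpace.induced
    (fun ν : M => fun X : Linf 𝔓 => pairSM ν.1 X.1) inferInstance

/-- The weak topology `σ(𝒳, 𝒴)` on `𝒳 ⊂ L⁰_c` induced by a set `𝒴` of signed measures. -/
noncomputable def sigmaTopDual (𝒳 : Set (Ω → ℝ)) (𝒴 : Set (SignedMeasure Ω)) :
    TopologicalSpace 𝒳 :=
  TopologicalSpace.induced
    (fun f : 𝒳 => fun ν : 𝒴 => pairSM ν.1 f.1) inferInstance

/-- `𝒞` is `𝒬`-stable: it contains every `𝒬`-aggregator of every `𝒬`-coherent family in `𝒞`. -/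
def QStable (𝒬 : Set (Measure Ω)) (𝒞 : Set (Ω → ℝ)) : Prop :=
  ∀ X : Measure Ω → Ω → ℝ, (∀ Q ∈ 𝒬, X Q ∈ 𝒞) →
    ∀ x : Ω → ℝ, Measurable x → (∀ Q ∈ 𝒬, X Q =ᵐ[Q] x) → x ∈ 𝒞

/-!
If `Yₙ` decreases to `0` in the `𝒫`-q.s. order, its pointwise infimum is a measurable lower
bound, hence `≤ 0` q.s.; so `Yₙ → 0` almost surely under every `Q ≪ 𝒫`. Order limits in `L⁰_c`
are therefore order limits in each `L⁰_Q`, `Q`-a.s. limits, and limits in `Q`-probability.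

In `L⁰_Q` a decreasing net with infimum `0` contains a sequence with infimum `0` (minimise
`E_Q[min (Y a) 1]`), so order closedness for nets reduces to sequences. If `Xₙ → x` in
`Q`-probability, a subsequence converges `Q`-a.s.; clamping `x` between `0` and `Xₙ` and cutting
down to the convergence set yields, by solidity, elements of `𝒞` converging everywhere, hence in
order, to a version of `x`. The reduction set turns statements about every `j_Q(𝒞)` back into
statements about `𝒞`.
-/
open scoped Topology

section QuasiSure

variable {𝔓 : Set (Measure Ω)} {Q : Measure Ω}

theorem qsLe_singleton {μ : Measure Ω} {f g : Ω → ℝ} : QSLe {μ} f g ↔ f ≤ᵐ[μ] g := by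
  simp [QSLe]

theorem QSLe.ae_le (hQ : AC 𝔓 Q) {f g : Ω → ℝ} (hf : Measurable f) (hg : Measurable g)
    (h : QSLe 𝔓 f g) : f ≤ᵐ[Q] g := by
  have hnull := hQ {ω | g ω < f ω} (measurableSet_lt hg hf) fun P hP => by
    simpa only [EventuallyLE, ae_iff, not_le] using h P hP
  simpa only [EventuallyLE, ae_iff, not_le] using hnull

theorem QSLe.singleton_of_ac (hQ : AC 𝔓 Q) {f g : Ω → ℝ} (hf : Measurable f)
    (hg : Measurable g) (h : QSLe 𝔓 f g) : QSLe {Q} f g :=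
  qsLe_singleton.2 (h.ae_le hQ hf hg)

end QuasiSure

section Infimum

/-- Taking positive parts keeps the real infimum bounded below, so that it is not a junk value. -/
noncomputable def infPosPart {α ι : Type*} (Y : ι → α → ℝ) (a : α) : ℝ := ⨅ i, (Y i a)⁺

theorem infPosPart_le {α ι : Type*} {Y : ι → α → ℝ} (i : ι) (a : α) :
    infPosPart Y a ≤ (Y i a)⁺ :=
  ciInf_le ⟨0, by rintro _ ⟨j, rfl⟩; exact posPart_nonneg _⟩ i

theorem le_infPosPart {α ι : Type*} [Nonempty ι] {Y : ι → α → ℝ} {c : ℝ} {a : α}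
    (h : ∀ i, c ≤ Y i a) : c ≤ infPosPart Y a :=
  le_ciInf fun i => (h i).trans (le_posPart _)

variable {𝔓 : Set (Measure Ω)} {ι : Type*} {Y : ι → Ω → ℝ}

theorem measurable_infPosPart [Countable ι] (hY : ∀ i, Measurable (Y i)) :
    Measurable (infPosPart Y) :=
  Measurable.iInf fun i => (hY i).max measurable_const

theorem IsQSInf.qsLe_infPosPart_zero [Countable ι] (hYm : ∀ i, Measurable (Y i))
    (hY : IsQSInf 𝔓 Y fun _ => 0) : QSLe 𝔓 (infPosPart Y) fun _ => 0 :=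
  hY.2 _ (measurable_infPosPart hYm) fun i P hP => (hY.1 i P hP).mono fun ω hω =>
    (infPosPart_le i ω).trans (posPart_eq_self.2 hω).le

theorem IsQSInf.singleton_of_ac [Countable ι] [Nonempty ι] {Q : Measure Ω} (hQ : AC 𝔓 Q)
    (hYm : ∀ i, Measurable (Y i)) (hY : IsQSInf 𝔓 Y fun _ => 0) : IsQSInf {Q} Y fun _ => 0 := by
  have hinf : infPosPart Y ≤ᵐ[Q] fun _ => 0 :=
    (hY.qsLe_infPosPart_zero hYm).ae_le hQ (measurable_infPosPart hYm) measurable_const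
  refine ⟨fun i => (hY.1 i).singleton_of_ac hQ measurable_const (hYm i),
    fun g _ hg => qsLe_singleton.2 ?_⟩
  filter_upwards [ae_all_iff.2 fun i => qsLe_singleton.1 (hg i), hinf] with ω hgY hω
  exact (le_infPosPart hgY).trans hω

theorem IsQSInf.tendsto_ae {μ : Measure Ω} {Y : ℕ → Ω → ℝ} (hYm : ∀ n, Measurable (Y n))
    (hanti : ∀ m n : ℕ, m ≤ n → QSLe {μ} (Y n) (Y m)) (hY : IsQSInf {μ} Y fun _ => 0) :
    ∀ᵐ ω ∂μ, Tendsto (fun n => Y n ω) atTop (𝓝 0) := by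
  have hsucc : ∀ᵐ ω ∂μ, ∀ n, Y (n + 1) ω ≤ Y n ω :=
    ae_all_iff.2 fun n => qsLe_singleton.1 (hanti n (n + 1) n.le_succ)
  filter_upwards [qsLe_singleton.1 (hY.qsLe_infPosPart_zero hYm), hsucc,
    ae_all_iff.2 fun n => qsLe_singleton.1 (hY.1 n)] with ω hinf hsucc hpos
  have hlim := tendsto_atTop_ciInf (antitone_nat_of_succ_le hsucc) ⟨(0 : ℝ), by
    rintro _ ⟨n, rfl⟩; exact hpos n⟩
  have hinf_eq : infPosPart Y ω = ⨅ n, Y n ω := by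
    simp only [infPosPart, posPart_eq_self.2 (hpos _)]
  rwa [← hinf_eq, le_antisymm hinf (le_infPosPart hpos)] at hlim

end Infimum

section OrderConvergence

variable {𝔓 : Set (Measure Ω)} {Q : Measure Ω} {X : ℕ → Ω → ℝ} {x : Ω → ℝ}

theorem SeqOrderConv.singleton_of_ac (hQ : AC 𝔓 Q) (hX : ∀ n, Measurable (X n))
    (hx : Measurable x) (h : SeqOrderConv 𝔓 X x) : SeqOrderConv {Q} X x := by
  obtain ⟨Y, hYm, hanti, hinf, hdom⟩ := h
  exact ⟨Y, hYm, fun m n hmn => (hanti m n hmn).singleton_of_ac hQ (hYm n) (hYm m),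
    hinf.singleton_of_ac hQ hYm,
    fun n => (hdom n).singleton_of_ac hQ ((hX n).sub hx).abs (hYm n)⟩

theorem SeqOrderConv.tendsto_ae {μ : Measure Ω} (h : SeqOrderConv {μ} X x) :
    ∀ᵐ ω ∂μ, Tendsto (fun n => X n ω) atTop (𝓝 (x ω)) := by
  obtain ⟨Y, hYm, hanti, hinf, hdom⟩ := h
  filter_upwards [hinf.tendsto_ae hYm hanti,
    ae_all_iff.2 fun n => qsLe_singleton.1 (hdom n)] with ω hY hdom
  exact tendsto_sub_nhds_zero_iff.1 (squeeze_zero_norm hdom hY)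

theorem SeqOrderConv.tendstoInMeasure (hQ : Q ∈ PC 𝔓) (hX : ∀ n, Measurable (X n))
    (hx : Measurable x) (h : SeqOrderConv 𝔓 X x) : TendstoInMeasure Q X atTop x :=
  have := hQ.1
  tendstoInMeasure_of_tendsto_ae (fun n => (hX n).aestronglyMeasurable)
    (h.singleton_of_ac hQ.2 hX hx).tendsto_ae

theorem seqOrderConv_of_tendsto (hX : ∀ n, Measurable (X n)) (hx : Measurable x)
    (h : ∀ ω, Tendsto (fun n => X n ω) atTop (𝓝 (x ω))) : SeqOrderConv 𝔓 X x := by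
  have hdist : ∀ ω, Tendsto (fun n => |X n ω - x ω|) atTop (𝓝 0) := fun ω => by
    simpa using ((h ω).sub_const (x ω)).abs
  have hbdd : ∀ ω, BddAbove (range fun n => |X n ω - x ω|) := fun ω =>
    (hdist ω).bddAbove_range
  have hbdd' : ∀ n ω, BddAbove (range fun k => |X (n + k) ω - x ω|) := fun n ω =>
    (hbdd ω).mono (by rintro _ ⟨k, rfl⟩; exact ⟨n + k, rfl⟩)
  set Y : ℕ → Ω → ℝ := fun n ω => ⨆ k, |X (n + k) ω - x ω|
  have hle : ∀ n k ω, |X (n + k) ω - x ω| ≤ Y n ω := fun n k ω => le_ciSup (hbdd' n ω) k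
  have hY0 : ∀ ω, Tendsto (fun n => Y n ω) atTop (𝓝 0) := by
    intro ω
    refine tendsto_order.2 ⟨fun a ha => Eventually.of_forall fun n =>
      ha.trans_le ((abs_nonneg _).trans (hle n 0 ω)), fun a ha => ?_⟩
    obtain ⟨N, hN⟩ := eventually_atTop.1 ((hdist ω).eventually (ge_mem_nhds (half_pos ha)))
    exact eventually_atTop.2 ⟨N, fun n hn =>
      (ciSup_le fun k => hN _ (by omega)).trans_lt (half_lt_self ha)⟩
  refine ⟨Y, fun n => Measurable.iSup fun k => ((hX _).sub hx).abs, ?_, ⟨?_, ?_⟩, ?_⟩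
  · exact fun m n hmn P _ => Eventually.of_forall fun ω => ciSup_le fun k => by
      simpa only [show n + k = m + (n - m + k) by omega] using hle m (n - m + k) ω
  · exact fun n P _ => Eventually.of_forall fun ω => (abs_nonneg _).trans (hle n 0 ω)
  · intro g _ hg P hP
    filter_upwards [ae_all_iff.2 fun n => hg n P hP] with ω hω
    exact ge_of_tendsto' (hY0 ω) hω
  · exact fun n P _ => Eventually.of_forall fun ω => hle n 0 ω

end OrderConvergence

section Solid

variable {𝔓 : Set (Measure Ω)} {𝒞 : Set (Ω → ℝ)}

theorem Solid.mem_of_mem_uIcc (hs : Solid 𝔓 𝒞) {f g : Ω → ℝ} (hf : f ∈ 𝒞) (hg : Measurable g)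
    (hfg : ∀ ω, g ω ∈ uIcc 0 (f ω)) : g ∈ 𝒞 := by
  rcases hs with hs | ⟨hsub, hs⟩
  · refine hs f hf g hg fun P _ => Eventually.of_forall fun ω => ?_
    rcases mem_uIcc.1 (hfg ω) with ⟨h0, hf⟩ | ⟨hf, h0⟩
    · exact abs_le_abs hf (by linarith)
    · exact (abs_le_abs (by linarith) (by linarith)).trans_eq (abs_neg _)
  · have hfpos := (hsub hf).2
    have hbetween : ∀ P ∈ 𝔓, ∀ᵐ ω ∂P, 0 ≤ g ω ∧ g ω ≤ f ω := fun P hP =>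
      (hfpos P hP).mono fun ω hω => by simpa [uIcc_of_le hω] using hfg ω
    exact hs f hf g ⟨hg, fun P hP => (hbetween P hP).mono fun _ h => h.1⟩
      fun P hP => (hbetween P hP).mono fun _ h => h.2

end Solid

theorem exists_tendsto_indicator_setOf_exists_tendsto {φ : ℕ → Ω → ℝ}
    (hφ : ∀ n, Measurable (φ n)) :
    ∃ y : Ω → ℝ, Measurable y ∧ ∀ ω, Tendsto (fun n =>
      {ω | ∃ c, Tendsto (fun n => φ n ω) atTop (𝓝 c)}.indicator (φ n) ω) atTop (𝓝 (y ω)) := by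
  set A := {ω | ∃ c, Tendsto (fun n => φ n ω) atTop (𝓝 c)}
  have hA : MeasurableSet A := measurableSet_exists_tendsto hφ
  have hconv : ∀ ω, ∃ c, Tendsto (fun n => A.indicator (φ n) ω) atTop (𝓝 c) := by
    intro ω
    by_cases hω : ω ∈ A
    · obtain ⟨c, hc⟩ := id hω
      exact ⟨c, hc.congr fun n => (indicator_of_mem hω _).symm⟩
    · exact ⟨0, tendsto_const_nhds.congr fun n => (indicator_of_notMem hω _).symm⟩
  have hlim := fun ω => tendsto_nhds_limUnder (hconv ω)
  exact ⟨_, measurable_of_tendsto_metrizable (fun n => (hφ n).indicator hA)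
    (tendsto_pi_nhds.2 hlim), hlim⟩

theorem max_min_mem_uIcc_zero (a b : ℝ) : max (min a (max 0 b)) (min 0 b) ∈ uIcc 0 b :=
  ⟨le_max_right _ _, max_le (min_le_right _ _) min_le_max⟩

theorem max_min_max_zero_self (a : ℝ) : max (min a (max 0 a)) (min 0 a) = a := by
  rcases le_total 0 a with h | h <;> simp [h]

theorem SeqOrderClosed.locallyQClosed {𝔓 : Set (Measure Ω)} {𝒞 : Set (Ω → ℝ)}
    (h𝒞 : 𝒞 ⊆ L0 Ω) (hs : Solid 𝔓 𝒞) (h : SeqOrderClosed 𝔓 𝒞) (Q : Measure Ω) :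
    LocallyQClosed Q 𝒞 := by
  intro X x hX hx hconv
  obtain ⟨ns, -, hae⟩ := hconv.exists_seq_tendsto_ae
  set φ : ℕ → Ω → ℝ := fun n ω => max (min (x ω) (max 0 (X (ns n) ω))) (min 0 (X (ns n) ω))
  have hφm : ∀ n, Measurable (φ n) := fun n =>
    (hx.min (measurable_const.max (h𝒞 (hX (ns n))))).max (measurable_const.min (h𝒞 (hX (ns n))))
  set A := {ω | ∃ c, Tendsto (fun n => φ n ω) atTop (𝓝 c)}
  have hψm : ∀ n, Measurable (A.indicator (φ n)) := fun n =>
    (hφm n).indicator (measurableSet_exists_tendsto hφm)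
  have hψ : ∀ n, A.indicator (φ n) ∈ 𝒞 := fun n =>
    hs.mem_of_mem_uIcc (hX (ns n)) (hψm n) fun ω => by
      by_cases hω : ω ∈ A
      · simpa only [indicator_of_mem hω] using max_min_mem_uIcc_zero _ _
      · simp only [indicator_of_notMem hω, left_mem_uIcc]
  obtain ⟨y, hym, hy⟩ := exists_tendsto_indicator_setOf_exists_tendsto hφm
  refine ⟨y, h _ y hψ hym (seqOrderConv_of_tendsto hψm hym hy), ?_⟩
  filter_upwards [hae] with ω hω
  have hφ : Tendsto (fun n => φ n ω) atTop (𝓝 (x ω)) := by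
    have h0 : Tendsto (fun _ : ℕ => (0 : ℝ)) atTop (𝓝 0) := tendsto_const_nhds
    have hlim := ((tendsto_const_nhds (x := x ω)).min (h0.max hω)).max (h0.min hω)
    rwa [max_min_max_zero_self] at hlim
  have hωA : ω ∈ A := ⟨_, hφ⟩
  exact tendsto_nhds_unique (hφ.congr fun n => (indicator_of_mem hωA _).symm) (hy ω)

section Net

variable {ι : Type*} [Preorder ι] [IsDirected ι (· ≤ ·)]

theorem exists_monotone_forall_le (a : ℕ → ι) : ∃ b : ℕ → ι, Monotone b ∧ ∀ n, a n ≤ b n := by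
  choose s hs₁ hs₂ using fun i j : ι => directed_of (· ≤ ·) i j
  let b : ℕ → ι := fun n => Nat.rec (a 0) (fun k bk => s bk (a (k + 1))) n
  refine ⟨b, monotone_nat_of_le_succ fun n => hs₁ _ _, fun n => ?_⟩
  cases n with
  | zero => exact le_rfl
  | succ n => exact hs₂ _ _

variable [Nonempty ι]

/-- The sequence is chosen to minimise `∫⁻ W a`; a `W a` cutting below its infimum on a set of
positive measure would lower the minimum further. -/
theorem exists_monotone_iInf_ae_le {μ : Measure Ω} {W : ι → Ω → ℝ≥0∞}
    (hWm : ∀ a, Measurable (W a)) (hanti : ∀ a b, a ≤ b → W b ≤ᵐ[μ] W a)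
    (hfin : ∀ a, ∫⁻ ω, W a ω ∂μ ≠ ∞) :
    ∃ b : ℕ → ι, Monotone b ∧ ∀ a, (fun ω => ⨅ n, W (b n) ω) ≤ᵐ[μ] W a := by
  obtain ⟨u, -, hu, hu_mem⟩ := exists_seq_tendsto_sInf
    (range_nonempty fun a => ∫⁻ ω, W a ω ∂μ) (OrderBot.bddBelow _)
  choose a₀ ha₀ using hu_mem
  obtain ⟨b, hb, hab⟩ := exists_monotone_forall_le a₀
  set h := fun ω => ⨅ n, W (b n) ω
  have hint_le : ∀ a, ∫⁻ ω, h ω ∂μ ≤ ∫⁻ ω, W a ω ∂μ := fun a =>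
    (ge_of_tendsto' hu fun n => (lintegral_mono fun ω => iInf_le _ n).trans
      ((lintegral_mono_ae (hanti _ _ (hab n))).trans (ha₀ n).le)).trans
      (sInf_le ⟨a, rfl⟩)
  refine ⟨b, hb, fun a => ?_⟩
  choose c hbc hac using fun n => directed_of (· ≤ ·) (b n) a
  have hmin_le : ∫⁻ ω, h ω ∂μ ≤ ∫⁻ ω, h ω ⊓ W a ω ∂μ := by
    simp only [h, iInf_inf]
    rw [lintegral_iInf' (fun n => ((hWm _).min (hWm a)).aemeasurable)
      ((ae_all_iff.2 fun n => hanti _ _ (hb n.le_succ)).mono fun ω hω =>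
        antitone_nat_of_succ_le fun n => inf_le_inf_right _ (hω n))
      (ne_top_of_le_ne_top (hfin a) (lintegral_mono fun ω => inf_le_right))]
    exact le_iInf fun n => (hint_le (c n)).trans (lintegral_mono_ae
      ((hanti _ _ (hbc n)).mp ((hanti _ _ (hac n)).mono fun ω h₁ h₂ => le_inf h₂ h₁)))
  have heq := ae_eq_of_ae_le_of_lintegral_le (ae_of_all _ fun ω => inf_le_left)
    (ne_top_of_le_ne_top (hfin a) (lintegral_mono fun ω => inf_le_right))
    (Measurable.iInf fun n => hWm (b n)).aemeasurable hmin_le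
  filter_upwards [heq] with ω hω
  exact hω ▸ inf_le_right

theorem NetOrderConv.exists_seqOrderConv {μ : Measure Ω} [IsFiniteMeasure μ]
    {X : ι → Ω → ℝ} {x : Ω → ℝ} (h : NetOrderConv {μ} X x) :
    ∃ b : ℕ → ι, SeqOrderConv {μ} (fun n => X (b n)) x := by
  obtain ⟨Y, hYm, hanti, hinf, hdom⟩ := h
  obtain ⟨b, hb, hle⟩ := exists_monotone_iInf_ae_le
    (W := fun a ω => ENNReal.ofReal (min (Y a ω) 1)) (μ := μ)
    (fun a => ((hYm a).min measurable_const).ennreal_ofReal)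
    (fun a b hab => (qsLe_singleton.1 (hanti a b hab)).mono fun ω hω =>
      ENNReal.ofReal_le_ofReal (min_le_min_right _ hω))
    (fun a => ne_top_of_le_ne_top (measure_ne_top μ univ) <| by
      simpa using lintegral_mono (μ := μ) fun ω =>
        (ENNReal.ofReal_le_ofReal (min_le_right (Y a ω) 1)).trans_eq ENNReal.ofReal_one)
  refine ⟨b, fun n => Y (b n), fun n => hYm _, fun m n hmn => hanti _ _ (hb hmn),
    ⟨fun n => hinf.1 _, fun g hg hgY => qsLe_singleton.2 ?_⟩, fun n => hdom _⟩
  have htrunc : QSLe {μ} (fun ω => max (min (g ω) 1) 0) fun _ => 0 := by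
    refine hinf.2 _ ((hg.min measurable_const).max measurable_const) fun a => qsLe_singleton.2 ?_
    filter_upwards [hle a, qsLe_singleton.1 (hinf.1 a),
      ae_all_iff.2 fun n => qsLe_singleton.1 (hgY n)] with ω hω hpos hgω
    have hg_le : ENNReal.ofReal (min (g ω) 1) ≤ ENNReal.ofReal (min (Y a ω) 1) :=
      (le_iInf fun n => ENNReal.ofReal_le_ofReal (min_le_min_right _ (hgω n))).trans hω
    rcases ENNReal.ofReal_le_ofReal_iff'.1 hg_le with h | h
    · exact max_le (h.trans (min_le_left _ _)) hpos
    · exact max_le (h.trans hpos) hpos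
  filter_upwards [qsLe_singleton.1 htrunc] with ω hω
  by_contra! hpos
  exact (lt_min hpos one_pos).not_ge ((le_max_left _ _).trans hω)

end Net

section Closedness

variable {𝔓 𝒬 : Set (Measure Ω)} {𝒞 : Set (Ω → ℝ)}

theorem mem_jSat_of_mem (h𝒞 : 𝒞 ⊆ L0 Ω) (Q : Measure Ω) {f : Ω → ℝ} (hf : f ∈ 𝒞) :
    f ∈ jSat Q 𝒞 :=
  ⟨h𝒞 hf, f, hf, .rfl⟩

theorem IsReductionSet.mem_of_forall_mem_jSat (hred : IsReductionSet 𝔓 𝒬 𝒞) {f : Ω → ℝ}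
    (hf : ∀ Q ∈ 𝒬, f ∈ jSat Q 𝒞) : f ∈ 𝒞 :=
  hred.2.2.ge (mem_iInter₂.2 hf)

theorem LocallyQClosed.qClosedSet_jSat {Q : Measure Ω} (h : LocallyQClosed Q 𝒞) :
    QClosedSet {Q} (jSat Q 𝒞) := by
  intro X x hX hx hconv
  choose g hg hXg using fun n => (hX n).2
  obtain ⟨y, hy, hxy⟩ := h g x hg hx ((hconv Q rfl).congr hXg .rfl)
  exact ⟨hx, y, hy, hxy⟩

theorem IsReductionSet.qClosedSet (hred : IsReductionSet 𝔓 𝒬 𝒞) (h𝒞 : 𝒞 ⊆ L0 Ω)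
    (h : ∀ Q ∈ 𝒬, QClosedSet {Q} (jSat Q 𝒞)) : QClosedSet 𝒬 𝒞 :=
  fun X x hX hx hconv => hred.mem_of_forall_mem_jSat fun Q hQ =>
    h Q hQ X x (fun n => mem_jSat_of_mem h𝒞 Q (hX n)) hx fun _ hQ' => hQ' ▸ hconv Q hQ

theorem IsReductionSet.seqOrderClosed (hred : IsReductionSet 𝔓 𝒬 𝒞) (h𝒞 : 𝒞 ⊆ L0 Ω)
    (h : ∀ Q ∈ 𝒬, SeqOrderClosed {Q} (jSat Q 𝒞)) : SeqOrderClosed 𝔓 𝒞 :=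
  fun X x hX hx hconv => hred.mem_of_forall_mem_jSat fun Q hQ =>
    h Q hQ X x (fun n => mem_jSat_of_mem h𝒞 Q (hX n)) hx
      (hconv.singleton_of_ac (hred.2.1 hQ).2 (fun n => h𝒞 (hX n)) hx)

theorem QClosedSet.seqOrderClosed (h𝒬 : 𝒬 ⊆ PC 𝔓) (h𝒞 : 𝒞 ⊆ L0 Ω) (h : QClosedSet 𝒬 𝒞) :
    SeqOrderClosed 𝔓 𝒞 :=
  fun X x hX hx hconv => h X x hX hx fun _ hQ =>
    hconv.tendstoInMeasure (h𝒬 hQ) (fun n => h𝒞 (hX n)) hx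

theorem QClosedSet.orderClosed {μ : Measure Ω} [IsFiniteMeasure μ] (h𝒞 : 𝒞 ⊆ L0 Ω)
    (h : QClosedSet {μ} 𝒞) : OrderClosed {μ} 𝒞 := by
  intro ι _ _ _ X x hX hx hconv
  obtain ⟨b, hb⟩ := hconv.exists_seqOrderConv
  refine h _ x (fun n => hX (b n)) hx fun _ hQ => hQ ▸ ?_
  exact tendstoInMeasure_of_tendsto_ae (fun n => (h𝒞 (hX (b n))).aestronglyMeasurable)
    hb.tendsto_ae

theorem OrderClosed.seqOrderClosed (h : OrderClosed.{_, u} 𝔓 𝒞) : SeqOrderClosed 𝔓 𝒞 := by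
  intro X x hX hx ⟨Y, hYm, hanti, hinf, hdom⟩
  exact h (ULift ℕ) (fun n => X n.down) x (fun n => hX _) hx
    ⟨fun n => Y n.down, fun n => hYm _, fun m n hmn => hanti _ _ hmn,
      ⟨fun n => hinf.1 _, fun g hg hgY => hinf.2 g hg fun n => hgY ⟨n⟩⟩, fun n => hdom _⟩

end Closedness

theorem stmt8_general {Ω : Type*} [MeasurableSpace Ω]
    (𝔓 : Set (Measure Ω))
    (𝒞 : Set (Ω → ℝ)) (h𝒞 : IsL0Set 𝔓 𝒞) (hsolid : Solid 𝔓 𝒞)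
    (𝒬 : Set (Measure Ω)) (hred : IsReductionSet 𝔓 𝒬 𝒞) :
    (SeqOrderClosed 𝔓 𝒞 ↔ QClosedSet 𝒬 𝒞) ∧
    (SeqOrderClosed 𝔓 𝒞 ↔ ∀ Q ∈ 𝒬, LocallyQClosed Q 𝒞) ∧
    (SeqOrderClosed 𝔓 𝒞 ↔ ∀ Q ∈ 𝒬, QClosedSet {Q} (jSat Q 𝒞)) ∧
    (SeqOrderClosed 𝔓 𝒞 ↔ ∀ Q ∈ 𝒬, OrderClosed {Q} (jSat Q 𝒞)) ∧
    (SeqOrderClosed 𝔓 𝒞 ↔ ∀ Q ∈ 𝒬, SeqOrderClosed {Q} (jSat Q 𝒞)) := by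
  have tfae : [SeqOrderClosed 𝔓 𝒞, QClosedSet 𝒬 𝒞, ∀ Q ∈ 𝒬, LocallyQClosed Q 𝒞,
      ∀ Q ∈ 𝒬, QClosedSet {Q} (jSat Q 𝒞), ∀ Q ∈ 𝒬, OrderClosed {Q} (jSat Q 𝒞),
      ∀ Q ∈ 𝒬, SeqOrderClosed {Q} (jSat Q 𝒞)].TFAE := by
    tfae_have 1 → 3 := fun h Q _ => h.locallyQClosed h𝒞.1 hsolid Q
    tfae_have 3 → 4 := fun h Q hQ => (h Q hQ).qClosedSet_jSat
    tfae_have 4 → 2 := hred.qClosedSet h𝒞.1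
    tfae_have 2 → 1 := QClosedSet.seqOrderClosed hred.2.1 h𝒞.1
    tfae_have 4 → 5 := fun h Q hQ =>
      have := (hred.2.1 hQ).1
      (h Q hQ).orderClosed fun _ hf => hf.1
    tfae_have 5 → 6 := fun h Q hQ => (h Q hQ).seqOrderClosed
    tfae_have 6 → 1 := hred.seqOrderClosed h𝒞.1
    tfae_finish
  exact ⟨tfae.out 0 1, tfae.out 0 2, tfae.out 0 3, tfae.out 0 4, tfae.out 0 5⟩

/-- Equivalent notions of closedness for solid `𝒫`-sensitive sets. -/
theorem stmt8 {Ω : Type*} [MeasurableSpace Ω]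
    (𝔓 : Set (Measure Ω)) (h𝔓ne : 𝔓.Nonempty)
    (h𝔓prob : ∀ P ∈ 𝔓, IsProbabilityMeasure P)
    (𝒞 : Set (Ω → ℝ)) (h𝒞 : IsL0Set 𝔓 𝒞) (hsolid : Solid 𝔓 𝒞)
    (𝒬 : Set (Measure Ω)) (hred : IsReductionSet 𝔓 𝒬 𝒞) :
    (SeqOrderClosed 𝔓 𝒞 ↔ QClosedSet 𝒬 𝒞) ∧
    (SeqOrderClosed 𝔓 𝒞 ↔ ∀ Q ∈ 𝒬, LocallyQClosed Q 𝒞) ∧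
    (SeqOrderClosed 𝔓 𝒞 ↔ ∀ Q ∈ 𝒬, QClosedSet {Q} (jSat Q 𝒞)) ∧
    (SeqOrderClosed 𝔓 𝒞 ↔ ∀ Q ∈ 𝒬, OrderClosed {Q} (jSat Q 𝒞)) ∧
    (SeqOrderClosed 𝔓 𝒞 ↔ ∀ Q ∈ 𝒬, SeqOrderClosed {Q} (jSat Q 𝒞)) :=
  stmt8_general 𝔓 𝒞 h𝒞 hsolid 𝒬 hred

end Robust
end

section
/- Let 𝒬 ⊂ 𝔓_c(Ω) be non-empty. A non-empty set 𝒞 ⊂ L⁰_c is 𝒫-sensitive with reduction set 𝒬 if and only if 𝒞 is 𝒬-stable. -/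
open MeasureTheory Filter Set
open scoped ENNReal

namespace Robust

variable {Ω : Type*} [MeasurableSpace Ω]

theorem subset_biInter_jSat {𝒞 : Set (Ω → ℝ)} (h𝒞 : 𝒞 ⊆ L0 Ω) (𝒬 : Set (Measure Ω)) :
    𝒞 ⊆ ⋂ Q ∈ 𝒬, jSat Q 𝒞 :=
  fun f hf => mem_iInter₂.2 fun _ _ => ⟨h𝒞 hf, f, hf, EventuallyEq.rfl⟩

/- Choosing, for each `Q ∈ 𝒬`, a member of `𝒞` that agrees with `x` `Q`-a.s. makes `x` an
aggregator of a family in `𝒞`; `𝒬 ≠ ∅` is what makes such an `x` measurable. -/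
theorem qStable_iff_biInter_jSat_subset {𝒬 : Set (Measure Ω)} (h𝒬 : 𝒬.Nonempty)
    (𝒞 : Set (Ω → ℝ)) : QStable 𝒬 𝒞 ↔ ⋂ Q ∈ 𝒬, jSat Q 𝒞 ⊆ 𝒞 := by
  constructor
  · intro hstable x hx
    have hxQ := mem_iInter₂.1 hx
    obtain ⟨Q₀, hQ₀⟩ := h𝒬
    choose! X hX hXx using fun Q (hQ : Q ∈ 𝒬) => (hxQ Q hQ).2
    exact hstable X hX x (hxQ Q₀ hQ₀).1 fun Q hQ => (hXx Q hQ).symm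
  · intro hsub X hX x hx hXx
    exact hsub <| mem_iInter₂.2 fun Q hQ => ⟨hx, X Q, hX Q hQ, (hXx Q hQ).symm⟩

theorem stmt13_general {Ω : Type*} [MeasurableSpace Ω]
    (𝔓 : Set (Measure Ω))
    (𝒬 : Set (Measure Ω)) (h𝒬ne : 𝒬.Nonempty) (h𝒬 : 𝒬 ⊆ PC 𝔓)
    (𝒞 : Set (Ω → ℝ)) (h𝒞L0 : IsL0Set 𝔓 𝒞) :
    IsReductionSet 𝔓 𝒬 𝒞 ↔ QStable 𝒬 𝒞 := by
  rw [qStable_iff_biInter_jSat_subset h𝒬ne, IsReductionSet, and_iff_right h𝒬ne,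
    and_iff_right h𝒬]
  exact ⟨Eq.ge, (subset_biInter_jSat h𝒞L0.1 𝒬).antisymm⟩

/-- `𝒞` is `𝒫`-sensitive with reduction set `𝒬` iff `𝒞` is `𝒬`-stable. -/
theorem stmt13 {Ω : Type*} [MeasurableSpace Ω]
    (𝔓 : Set (Measure Ω)) (h𝔓ne : 𝔓.Nonempty)
    (h𝔓prob : ∀ P ∈ 𝔓, IsProbabilityMeasure P)
    (𝒬 : Set (Measure Ω)) (h𝒬ne : 𝒬.Nonempty) (h𝒬 : 𝒬 ⊆ PC 𝔓)
    (𝒞 : Set (Ω → ℝ)) (h𝒞L0 : IsL0Set 𝔓 𝒞) (h𝒞ne : 𝒞.Nonempty) :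
    IsReductionSet 𝔓 𝒬 𝒞 ↔ QStable 𝒬 𝒞 :=
  stmt13_general 𝔓 𝒬 h𝒬ne h𝒬 𝒞 h𝒞L0

end Robust
end
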